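/- Let m ≡ 2 (mod 4) with m ≥ 6, n = 2^m − 1, and a = 2^{(m+4)/2} − 1. Then for every integer k with 1 ≤ k ≤ 2^{(m−4)/2} or with 2^m − 2^{(m−4)/2} − 1 ≤ k ≤ 2^m − 2, the residue a·k mod n lies in T_{(1,m)}. -/

import Mathlib

open Polynomial

noncomputable def wt2 (a : ℕ) : ℕ := (Nat.digits 2 a).sum

noncomputable def ell (m i : ℕ) : ℕ :=
  sInf {l : ℕ | 0 < l ∧ i * 2 ^ l % (2 ^ m - 1) = i % (2 ^ m - 1)}

noncomputable def coset (m i : ℕ) : Finset ℕ :=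
  (Finset.range (ell m i)).image (fun j => i * 2 ^ j % (2 ^ m - 1))

noncomputable def rho (m i : ℕ) : ℕ := ((coset m i).filter (fun x => x % 2 = 0)).card

noncomputable def vv (m i : ℕ) : ℕ := m * rho m i / ell m i % 2

noncomputable def Tset (m j : ℕ) : Finset ℕ :=
  (Finset.range (2 ^ m - 1)).filter (fun i => vv m i = j)

noncomputable def Nset (m j : ℕ) : Finset ℕ :=
  (Finset.range (2 ^ m - 1)).filter (fun a => a ≠ 0 ∧ wt2 a % 2 = j)

noncomputable def epsilon (h a : ℕ) : ℕ :=
  if a = 2 ^ h - 1 then 1 else sInf {t : ℕ | 2 ^ h - 1 ≤ 2 ^ t * a}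

noncomputable def kappa (h a : ℕ) : ℕ := epsilon h a % 2

noncomputable def leader (m i : ℕ) : ℕ := sInf {x : ℕ | x ∈ coset m i}

noncomputable def uu (m h i : ℕ) : ℕ :=
  if leader m i = 1 then (vv m 1 + h + 1) % 2
  else if leader m i % 2 = 1 ∧ leader m i ≤ 2 ^ h - 1 then
    (kappa h (leader m i) + vv m (leader m i)) % 2
  else vv m (leader m i)

noncomputable def Dset (m h j : ℕ) : Finset ℕ :=
  (Finset.range (2 ^ m - 1)).filter (fun i => uu m h i = j)

noncomputable def cyclicCode (m : ℕ) (α : GaloisField 2 m) (T : Set ℕ) :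
    Submodule (ZMod 2) (Polynomial (ZMod 2)) :=
  Polynomial.degreeLT (ZMod 2) (2 ^ m - 1) ⊓
    ⨅ j ∈ T, LinearMap.ker (Polynomial.aeval (α ^ j)).toLinearMap

def minDistGE (C : Submodule (ZMod 2) (Polynomial (ZMod 2))) (d : ℕ) : Prop :=
  ∀ c ∈ C, c ≠ 0 → d ≤ c.support.card

/-!
Doubling modulo `2 ^ m - 1` rotates the `m`-bit binary expansion cyclically, so in `m` doublings
every bit of `i` passes once through the units place: running `m / l_i` times around the coset
meets exactly `m - wt(i)` even numbers, whence `v_i ≡ m - wt(i) (mod 2)`.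

With `h = (m + 4) / 2`, for `1 ≤ k ≤ 2 ^ ((m - 4) / 2)` the number
`(2 ^ h - 1) k = 2 ^ h (k - 1) + (2 ^ h - 1 - (k - 1))` is below `2 ^ m - 1` and has weight
exactly `h`, while `m - h = (m - 4) / 2` is odd. For `k` at the top of the range, `k ≡ -k'` with
`k'` small, and negation modulo `2 ^ m - 1` complements all `m` bits, leaving weight `m - h`;
then `m - (m - h) = h` is odd.
-/

open Function

lemma wt2_eq_mod_add_wt2_div (a : ℕ) : wt2 a = a % 2 + wt2 (a / 2) := by
  rcases Nat.eq_zero_or_pos a with rfl | ha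
  · simp [wt2]
  · simp [wt2, Nat.digits_def' one_lt_two ha]

lemma wt2_two_pow_mul_add (h q : ℕ) {r : ℕ} (hr : r < 2 ^ h) :
    wt2 (2 ^ h * q + r) = wt2 q + wt2 r := by
  induction h generalizing r with
  | zero =>
    obtain rfl : r = 0 := by omega
    simp [wt2]
  | succ h ih =>
    rw [pow_succ'] at hr ⊢
    rw [wt2_eq_mod_add_wt2_div (2 * 2 ^ h * q + r), wt2_eq_mod_add_wt2_div r, mul_assoc,
      show (2 * (2 ^ h * q) + r) / 2 = 2 ^ h * q + r / 2 by omega, ih (by omega)]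
    omega

lemma wt2_two_pow_sub_one_sub_add_wt2 (h : ℕ) {t : ℕ} (ht : t < 2 ^ h) :
    wt2 (2 ^ h - 1 - t) + wt2 t = h := by
  induction h generalizing t with
  | zero =>
    obtain rfl : t = 0 := by omega
    simp [wt2]
  | succ h ih =>
    have := ih (t := t / 2) (by omega)
    rw [wt2_eq_mod_add_wt2_div t, wt2_eq_mod_add_wt2_div (2 ^ (h + 1) - 1 - t), pow_succ',
      show (2 * 2 ^ h - 1 - t) / 2 = 2 ^ h - 1 - t / 2 by omega]
    omega

lemma wt2_two_pow_sub_one_mul {h k : ℕ} (hk : 1 ≤ k) (hkh : k ≤ 2 ^ h) :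
    wt2 ((2 ^ h - 1) * k) = h := by
  have : (2 ^ h - 1) * k = 2 ^ h * (k - 1) + (2 ^ h - 1 - (k - 1)) := by
    have : k ≤ 2 ^ h * k := Nat.le_mul_of_pos_left k (Nat.two_pow_pos h)
    have : 2 ^ h ≤ 2 ^ h * k := Nat.le_mul_of_pos_right _ hk
    rw [Nat.sub_one_mul, Nat.mul_sub_one]
    omega
  rw [this, wt2_two_pow_mul_add _ _ (by omega), add_comm,
    wt2_two_pow_sub_one_sub_add_wt2 _ (by omega)]

lemma sum_range_div_two_pow_mod_two {m i : ℕ} (hi : i < 2 ^ m) :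
    ∑ t ∈ Finset.range m, i / 2 ^ t % 2 = wt2 i := by
  induction m generalizing i with
  | zero =>
    obtain rfl : i = 0 := by omega
    simp [wt2]
  | succ m ih =>
    simp only [Finset.sum_range_succ', pow_succ', ← Nat.div_div_eq_div_mul, pow_zero, Nat.div_one]
    rw [ih (by rw [pow_succ'] at hi; omega), wt2_eq_mod_add_wt2_div i, add_comm]

lemma mul_two_pow_mod_eq {m i j : ℕ} (hi : i < 2 ^ m - 1) (hj : j ≤ m) :
    i * 2 ^ j % (2 ^ m - 1) = i % 2 ^ (m - j) * 2 ^ j + i / 2 ^ (m - j) := by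
  have hQP : 2 ^ (m - j) * 2 ^ j = 2 ^ m := by rw [← pow_add, Nat.sub_add_cancel hj]
  have ha : i % 2 ^ (m - j) < 2 ^ (m - j) := Nat.mod_lt _ (by positivity)
  have hb : i / 2 ^ (m - j) < 2 ^ j := Nat.div_lt_of_lt_mul (by omega)
  have hdecomp := Nat.mod_add_div i (2 ^ (m - j))
  generalize i % 2 ^ (m - j) = a, i / 2 ^ (m - j) = b at *
  subst hdecomp
  have hmod : (a + 2 ^ (m - j) * b) * 2 ^ j ≡ a * 2 ^ j + b [MOD 2 ^ m - 1] :=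
    calc (a + 2 ^ (m - j) * b) * 2 ^ j = a * 2 ^ j + b * 2 ^ m := by rw [← hQP]; ring
      _ ≡ a * 2 ^ j + b * 1 [MOD 2 ^ m - 1] :=
        ((Nat.modEq_sub Nat.one_le_two_pow).mul_left _).add_left _
      _ = a * 2 ^ j + b := by rw [mul_one]
  rw [hmod, Nat.mod_eq_of_lt]
  rw [← hQP] at hi ⊢
  generalize 2 ^ (m - j) = Q, 2 ^ j = P at *
  rw [Nat.lt_sub_iff_add_lt] at hi ⊢
  -- reaching `Q * P - 1` would force `a = Q - 1` and `b = P - 1`, i.e. `i = Q * P - 1`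
  rcases Nat.lt_or_ge (a + 1) Q with ha' | ha'
  · nlinarith [Nat.mul_le_mul_right P ha']
  · obtain rfl : Q = a + 1 := by omega
    have : b + 1 < P := Nat.lt_of_mul_lt_mul_left (a := a + 1) (by nlinarith)
    nlinarith

lemma Nat.count_mul_of_periodic {p : ℕ → Prop} [DecidablePred p] {a : ℕ} (hp : Periodic p a)
    (q : ℕ) : Nat.count p (q * a) = q * Nat.count p a := by
  induction q with
  | zero => simp
  | succ q ih =>
    have hshift : (fun k => p (q * a + k)) = p := funext fun k => by
      rw [add_comm]; exact hp.nat_mul q k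
    simp only [Nat.succ_mul, Nat.count_add, ih, hshift]

def mulTwoMod (n x : ℕ) : ℕ := x * 2 % n

lemma mulTwoMod_iterate {n i : ℕ} (hi : i < n) (j : ℕ) :
    (mulTwoMod n)^[j] i = i * 2 ^ j % n := by
  induction j with
  | zero => simp [Nat.mod_eq_of_lt hi]
  | succ j ih => rw [iterate_succ_apply', ih, mulTwoMod, Nat.mod_mul_mod, pow_succ, mul_assoc]

section Orbit

variable {m i : ℕ}

lemma isPeriodicPt_mulTwoMod (hi : i < 2 ^ m - 1) :
    IsPeriodicPt (mulTwoMod (2 ^ m - 1)) m i := by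
  simp [IsPeriodicPt, IsFixedPt, mulTwoMod_iterate hi, mul_two_pow_mod_eq hi le_rfl, Nat.mod_one]

lemma ell_eq_minimalPeriod (hi : i < 2 ^ m - 1) :
    ell m i = minimalPeriod (mulTwoMod (2 ^ m - 1)) i := by
  simp only [minimalPeriod_eq_sInf_n_pos_IsPeriodicPt, ell, IsPeriodicPt, IsFixedPt,
    mulTwoMod_iterate hi, Nat.mod_eq_of_lt hi]

lemma rho_eq_count (hi : i < 2 ^ m - 1) :
    rho m i = Nat.count (fun j => (mulTwoMod (2 ^ m - 1))^[j] i % 2 = 0)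
      (minimalPeriod (mulTwoMod (2 ^ m - 1)) i) := by
  have hcoset : coset m i = (Finset.range (minimalPeriod (mulTwoMod (2 ^ m - 1)) i)).image
      fun j => (mulTwoMod (2 ^ m - 1))^[j] i := by
    simp only [coset, ell_eq_minimalPeriod hi, mulTwoMod_iterate hi]
  rw [rho, hcoset, Finset.filter_image, Finset.card_image_of_injOn, Nat.count_eq_card_filter_range]
  exact iterate_injOn_Iio_minimalPeriod.mono fun j hj => by simp_all

lemma sum_range_iterate_mulTwoMod_mod_two (hi : i < 2 ^ m - 1) :
    ∑ j ∈ Finset.range m, (mulTwoMod (2 ^ m - 1))^[j] i % 2 = wt2 i := by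
  set g := fun j => (mulTwoMod (2 ^ m - 1))^[j] i % 2
  have hshift := Finset.sum_range_succ' g m
  have hperiod : g m = g 0 := by
    simp only [g, (isPeriodicPt_mulTwoMod hi).eq, iterate_zero_apply]
  rw [Finset.sum_range_succ, hperiod] at hshift
  -- one more doubling moves bit `m - 1 - j` of `i` into the units place
  have hbit : ∀ j ∈ Finset.range m, g (j + 1) = i / 2 ^ (m - 1 - j) % 2 := by
    intro j hj
    rw [Finset.mem_range] at hj
    simp only [g]
    rw [mulTwoMod_iterate hi, mul_two_pow_mod_eq hi hj, show m - (j + 1) = m - 1 - j by omega,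
      pow_succ, ← mul_assoc, add_comm, Nat.add_mul_mod_self_right]
  calc ∑ j ∈ Finset.range m, g j = ∑ j ∈ Finset.range m, g (j + 1) := by omega
    _ = ∑ j ∈ Finset.range m, i / 2 ^ (m - 1 - j) % 2 := Finset.sum_congr rfl hbit
    _ = wt2 i := by
      rw [Finset.sum_range_reflect (fun t => i / 2 ^ t % 2) m,
        sum_range_div_two_pow_mod_two (by omega)]

lemma count_iterate_mulTwoMod_even (hi : i < 2 ^ m - 1) :
    Nat.count (fun j => (mulTwoMod (2 ^ m - 1))^[j] i % 2 = 0) m = m - wt2 i := by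
  rw [Nat.count_eq_card_filter_range, Finset.card_filter,
    ← sum_range_iterate_mulTwoMod_mod_two hi]
  have hsum := Finset.sum_add_distrib (s := Finset.range m)
    (f := fun j => if (mulTwoMod (2 ^ m - 1))^[j] i % 2 = 0 then 1 else 0)
    (g := fun j => (mulTwoMod (2 ^ m - 1))^[j] i % 2)
  rw [Finset.sum_congr rfl fun j _ => show _ = 1 by split_ifs <;> omega, Finset.sum_const,
    Finset.card_range, smul_eq_mul, mul_one] at hsum
  omega

lemma vv_eq_sub_wt2_mod_two (hm : 0 < m) (hi : i < 2 ^ m - 1) : vv m i = (m - wt2 i) % 2 := by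
  have hper := isPeriodicPt_mulTwoMod hi
  obtain ⟨q, hq⟩ := hper.minimalPeriod_dvd
  have hperiodic : Periodic (fun j => (mulTwoMod (2 ^ m - 1))^[j] i % 2 = 0)
      (minimalPeriod (mulTwoMod (2 ^ m - 1)) i) := fun j => by
    simp only [iterate_add_apply, iterate_minimalPeriod]
  have hcount := Nat.count_mul_of_periodic hperiodic q
  rw [mul_comm, ← hq, count_iterate_mulTwoMod_even hi] at hcount
  rw [vv, rho_eq_count hi, ell_eq_minimalPeriod hi]
  have key : m * Nat.count (fun j => (mulTwoMod (2 ^ m - 1))^[j] i % 2 = 0)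
      (minimalPeriod (mulTwoMod (2 ^ m - 1)) i) =
      minimalPeriod (mulTwoMod (2 ^ m - 1)) i * (m - wt2 i) := by
    rw [hcount]
    nth_rewrite 1 [hq]
    ring
  rw [key, Nat.mul_div_cancel_left _ (hper.minimalPeriod_pos hm)]

end Orbit

lemma two_pow_sub_one_mul_lt {h g k : ℕ} (hg : 1 ≤ g) (hk : k ≤ 2 ^ g) :
    (2 ^ h - 1) * k < 2 ^ (h + g) - 1 := by
  have h2g : 2 ≤ 2 ^ g := Nat.le_self_pow (by omega) 2
  have : (2 ^ h - 1) * 2 ^ g = 2 ^ (h + g) - 2 ^ g := by rw [Nat.sub_one_mul, pow_add]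
  have := Nat.mul_le_mul_left (2 ^ h - 1) hk
  have : 2 ^ g ≤ 2 ^ (h + g) := Nat.pow_le_pow_right (by omega) (by omega)
  omega

lemma mul_sub_mod_eq_sub {n a k : ℕ} (hk : k ≤ n) (hpos : 0 < a * k) (hlt : a * k < n) :
    a * (n - k) % n = n - a * k := by
  rw [← Nat.mod_eq_of_lt (show n - a * k < n by omega), ← ZMod.natCast_eq_natCast_iff']
  push_cast [Nat.cast_sub hk, Nat.cast_sub hlt.le]
  simp

theorem stmt7 (m : ℕ) (hm4 : m % 4 = 2) (hm : 6 ≤ m) (k : ℕ)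
    (hk : (1 ≤ k ∧ k ≤ 2 ^ ((m - 4) / 2)) ∨
      (2 ^ m - 2 ^ ((m - 4) / 2) - 1 ≤ k ∧ k ≤ 2 ^ m - 2)) :
    (2 ^ ((m + 4) / 2) - 1) * k % (2 ^ m - 1) ∈ Tset m 1 := by
  have hm_eq : m = (m + 4) / 2 + (m - 4) / 2 := by omega
  have hg : 1 ≤ (m - 4) / 2 := by omega
  have hn : 2 ≤ 2 ^ m := Nat.le_self_pow (by omega) 2
  have hsmall : ∀ k', 1 ≤ k' → k' ≤ 2 ^ ((m - 4) / 2) →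
      (2 ^ ((m + 4) / 2) - 1) * k' < 2 ^ m - 1 ∧
        wt2 ((2 ^ ((m + 4) / 2) - 1) * k') = (m + 4) / 2 := fun k' h1 h2 =>
    ⟨by simpa only [← hm_eq] using two_pow_sub_one_mul_lt (h := (m + 4) / 2) hg h2,
      wt2_two_pow_sub_one_mul h1 (h2.trans (Nat.pow_le_pow_right (by omega) (by omega)))⟩
  simp only [Tset, Finset.mem_filter, Finset.mem_range]
  refine ⟨Nat.mod_lt _ (by omega), ?_⟩
  rcases hk with ⟨h1, h2⟩ | ⟨h1, h2⟩
  · obtain ⟨hlt, hwt⟩ := hsmall k h1 h2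
    rw [Nat.mod_eq_of_lt hlt, vv_eq_sub_wt2_mod_two (by omega) hlt, hwt]
    omega
  · obtain ⟨hlt, hwt⟩ := hsmall (2 ^ m - 1 - k) (by omega) (by omega)
    have hpos : 0 < (2 ^ ((m + 4) / 2) - 1) * (2 ^ m - 1 - k) :=
      Nat.mul_pos (Nat.sub_pos_of_lt (Nat.one_lt_two_pow (by omega))) (by omega)
    have hcompl := wt2_two_pow_sub_one_sub_add_wt2 m (hlt.trans (by omega))
    rw [show k = 2 ^ m - 1 - (2 ^ m - 1 - k) by omega, mul_sub_mod_eq_sub (by omega) hpos hlt,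
      vv_eq_sub_wt2_mod_two (by omega) (by omega)]
    omega
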